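/- (Symmetry lemma from the proof of Proposition 9.) Suppose the density f is symmetric about its mean m, i.e. f(m + x) = f(m − x) for all x ∈ ℝ, and set the taste parameter t = m. Then the fixed points satisfy k₀(m) = 2m − k₁(m), the threshold satisfies Θ(m) = m, and hence the voter with cost γ = m is exactly indifferent between the rewards r₁* = k₁(m)/ρ(δ,φ) and r₀* = k₀(m)/ρ(δ,φ). -/

import Mathlib

open MeasureTheory

/-- A cost distribution: a CDF `F` with continuously differentiable structure
given by a strictly positive, differentiable, log-concave density `f` with full
support on `ℝ`. -/
structure CostDist where
  F : ℝ → ℝ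
  f : ℝ → ℝ
  deriv_eq : ∀ x : ℝ, HasDerivAt F (f x) x
  f_pos : ∀ x : ℝ, 0 < f x
  f_diff : Differentiable ℝ f
  f_logConcave : ConcaveOn ℝ Set.univ fun x => Real.log (f x)
  tendsto_bot : Filter.Tendsto F Filter.atBot (nhds 0)
  tendsto_top : Filter.Tendsto F Filter.atTop (nhds 1)

/-- Expected responsiveness of the classifier `δ = (δ₁, δ₀)` at precision `φ`. -/
noncomputable def rho (d1 d0 phi : ℝ) : ℝ := (d1 + d0 - 1) * (2 * phi - 1)

/-- The designer's expected payoff `EU_D(δ | r)`. -/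
noncomputable def EUD (D : CostDist) (phi A1 A0 B1 B0 r d1 d0 : ℝ) : ℝ :=
  D.F (r * rho d1 d0 phi) *
      (phi * (A1 * d1 + A0 * (1 - d1)) + (1 - phi) * (A0 * d0 + A1 * (1 - d0))) +
    (1 - D.F (r * rho d1 d0 phi)) *
      (phi * (B1 * d0 + B0 * (1 - d0)) + (1 - phi) * (B0 * d1 + B1 * (1 - d1)))

/-- A voter's expected payoff conditional on complying, `EU₁(r | γ)`. -/
noncomputable def EU1 (D : CostDist) (phi t gamma d1 d0 r : ℝ) : ℝ :=
  -gamma + r * rho d1 d0 phi * (1 - D.F (r * rho d1 d0 phi)) + t * D.F (r * rho d1 d0 phi)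

/-- A voter's expected payoff conditional on not complying, `EU₀(r)`. -/
noncomputable def EU0 (D : CostDist) (phi t d1 d0 r : ℝ) : ℝ :=
  -(r * rho d1 d0 phi) * D.F (r * rho d1 d0 phi) + t * D.F (r * rho d1 d0 phi)

/-- A voter's overall payoff `V(r | γ) = max(EU₁(r | γ), EU₀(r))`. -/
noncomputable def V (D : CostDist) (phi t gamma d1 d0 r : ℝ) : ℝ :=
  max (EU1 D phi t gamma d1 d0 r) (EU0 D phi t d1 d0 r)

/-- Strict quasiconcavity of a real function on a set. -/
def StrictQuasiconcaveOn (s : Set ℝ) (g : ℝ → ℝ) : Prop :=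
  ∀ ⦃x⦄, x ∈ s → ∀ ⦃y⦄, y ∈ s → x ≠ y → ∀ ⦃a b : ℝ⦄, 0 < a → 0 < b → a + b = 1 →
    min (g x) (g y) < g (a * x + b * y)

/-- Strict quasiconvexity of a real function on a set. -/
def StrictQuasiconvexOn (s : Set ℝ) (g : ℝ → ℝ) : Prop :=
  ∀ ⦃x⦄, x ∈ s → ∀ ⦃y⦄, y ∈ s → x ≠ y → ∀ ⦃a b : ℝ⦄, 0 < a → 0 < b → a + b = 1 →
    g (a * x + b * y) < max (g x) (g y)

/-- `(r, δ)` is an equilibrium: `r` maximizes the median voter's payoff given `δ`,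
and `δ ∈ [0,1]²` maximizes the designer's payoff given `r`. -/
def IsEquilibrium (D : CostDist) (phi t A1 A0 B1 B0 gammaMu r d1 d0 : ℝ) : Prop :=
  d1 ∈ Set.Icc (0 : ℝ) 1 ∧ d0 ∈ Set.Icc (0 : ℝ) 1 ∧
  (∀ r' : ℝ, V D phi t gammaMu d1 d0 r' ≤ V D phi t gammaMu d1 d0 r) ∧
  (∀ e1 ∈ Set.Icc (0 : ℝ) 1, ∀ e0 ∈ Set.Icc (0 : ℝ) 1,
    EUD D phi A1 A0 B1 B0 r e1 e0 ≤ EUD D phi A1 A0 B1 B0 r d1 d0)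

/-!
By symmetry, `F (2m - x) = 1 - F x` and `f (2m - x) = f x`, so `2m - k₁` solves the fixed-point
equation of `k₀`. Log-concavity of `f` makes the ratio `F / f` nondecreasing, hence
`k ↦ k + F k / f k` is injective and `k₀ = 2m - k₁`. The remaining identities are then algebra,
once `V` is written as `(t - k) F k + max (k - γ) 0` with `k = rρ`.
-/

namespace CostDist

variable (D : CostDist)

lemma monotone_F : Monotone D.F :=
  (strictMono_of_deriv_pos fun x => by rw [(D.deriv_eq x).deriv]; exact D.f_pos x).monotone

lemma F_le_one (x : ℝ) : D.F x ≤ 1 :=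
  D.monotone_F.ge_of_tendsto D.tendsto_top x

lemma F_two_mul_sub {m : ℝ} (hsym : ∀ x : ℝ, D.f (m + x) = D.f (m - x)) (x : ℝ) :
    D.F (2 * m - x) = 1 - D.F x := by
  set G : ℝ → ℝ := fun x => D.F x + D.F (2 * m - x) with hG
  have hG' : ∀ x, HasDerivAt G 0 x := by
    intro x
    have h := (D.deriv_eq x).add ((D.deriv_eq (2 * m - x)).comp x ((hasDerivAt_id x).const_sub _))
    have hfx : D.f (2 * m - x) = D.f x := by
      simpa [show m + (m - x) = 2 * m - x by ring] using hsym (m - x)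
    rwa [hfx, mul_neg_one, add_neg_cancel] at h
  have hconst : ∀ x y, G x = G y :=
    is_const_of_deriv_eq_zero (fun x => (hG' x).differentiableAt) fun x => (hG' x).deriv
  have hlim : Filter.Tendsto G Filter.atTop (nhds 1) := by
    have hrefl : Filter.Tendsto (fun x : ℝ => 2 * m - x) Filter.atTop Filter.atBot :=
      Filter.tendsto_atBot_add_const_left _ _ Filter.tendsto_neg_atTop_atBot
    simpa using D.tendsto_top.add (D.tendsto_bot.comp hrefl)
  have hGx : G x = 1 :=
    tendsto_nhds_unique tendsto_const_nhds (hlim.congr fun y => hconst y x)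
  simp only [hG] at hGx
  linarith

lemma antitone_deriv_f_div_f : Antitone fun x => deriv D.f x / D.f x := by
  have hlog : ∀ x, HasDerivAt (fun y => Real.log (D.f y)) (deriv D.f x / D.f x) x :=
    fun x => (D.f_diff x).hasDerivAt.log (D.f_pos x).ne'
  intro x y hxy
  have h := D.f_logConcave.antitoneOn_deriv (fun x _ => (hlog x).differentiableAt)
    (Set.mem_univ x) (Set.mem_univ y) hxy
  rwa [(hlog x).deriv, (hlog y).deriv] at h

lemma deriv_f_mul_F_le (k : ℝ) : deriv D.f k * D.F k ≤ D.f k * D.f k := by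
  -- `x ↦ f k * f x - f' k * F x` has derivative `f k f' x - f' k f x ≥ 0` on `x ≤ k`.
  set h : ℝ → ℝ := fun x => D.f k * D.f x - deriv D.f k * D.F x with hh
  have hderiv : ∀ x, HasDerivAt h (D.f k * deriv D.f x - deriv D.f k * D.f x) x :=
    fun x => ((D.f_diff x).hasDerivAt.const_mul _).sub ((D.deriv_eq x).const_mul _)
  have hmono : MonotoneOn h (Set.Iic k) := by
    refine monotoneOn_of_hasDerivWithinAt_nonneg (convex_Iic k)
      (fun x _ => (hderiv x).continuousAt.continuousWithinAt)
      (fun x _ => (hderiv x).hasDerivWithinAt) fun x hx => ?_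
    rw [interior_Iic] at hx
    have hr := D.antitone_deriv_f_div_f (le_of_lt hx)
    rw [div_le_div_iff₀ (D.f_pos k) (D.f_pos x)] at hr
    linarith
  have hbelow : ∀ᶠ a in Filter.atBot, -(deriv D.f k * D.F a) ≤ h k := by
    filter_upwards [Filter.eventually_le_atBot k] with a ha
    have := hmono ha (Set.mem_Iic.2 le_rfl) ha
    simp only [hh] at this ⊢
    nlinarith [mul_pos (D.f_pos k) (D.f_pos a)]
  have hlim : Filter.Tendsto (fun a => -(deriv D.f k * D.F a)) Filter.atBot (nhds 0) := by
    simpa using (D.tendsto_bot.const_mul (deriv D.f k)).neg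
  have := le_of_tendsto hlim hbelow
  simp only [hh] at this
  linarith

lemma monotone_F_div_f : Monotone fun k => D.F k / D.f k := by
  have hd : ∀ k, HasDerivAt (fun k => D.F k / D.f k)
      ((D.f k * D.f k - D.F k * deriv D.f k) / D.f k ^ 2) k :=
    fun k => (D.deriv_eq k).div (D.f_diff k).hasDerivAt (D.f_pos k).ne'
  refine monotone_of_deriv_nonneg (fun k => (hd k).differentiableAt) fun k => ?_
  rw [(hd k).deriv]
  exact div_nonneg (by linarith [D.deriv_f_mul_F_le k]) (sq_nonneg _)

lemma injective_add_F_div_f : Function.Injective fun k => k + D.F k / D.f k :=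
  (strictMono_id.add_monotone D.monotone_F_div_f).injective

lemma k0_eq_two_mul_sub_k1 {m k0 k1 : ℝ} (hsym : ∀ x : ℝ, D.f (m + x) = D.f (m - x))
    (hk1 : k1 = m + (1 - D.F k1) / D.f k1) (hk0 : k0 = m - D.F k0 / D.f k0) :
    k0 = 2 * m - k1 := by
  have hf : D.f (2 * m - k1) = D.f k1 := by
    simpa [show m - (k1 - m) = 2 * m - k1 by ring] using (hsym (k1 - m)).symm
  refine D.injective_add_F_div_f ?_
  simp only [D.F_two_mul_sub hsym, hf]
  linarith

end CostDist

lemma V_div_rho (D : CostDist) {phi t gamma d1 d0 : ℝ} (k : ℝ) (hrho : rho d1 d0 phi ≠ 0) :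
    V D phi t gamma d1 d0 (k / rho d1 d0 phi) = (t - k) * D.F k + max (k - gamma) 0 := by
  rw [V, EU1, EU0, div_mul_cancel₀ k hrho, ← max_add_add_left, add_zero]
  congr 1 <;> ring

/-- **Symmetry lemma (proof of Proposition 9).** If the density is symmetric about its
mean `m` and the taste parameter is `t = m`, then `k₀(m) = 2m − k₁(m)`, `Θ(m) = m`, and
the voter with cost `m` is exactly indifferent between `r₁*` and `r₀*`. -/
theorem prop9_symmetry (D : CostDist) (m k0v k1v : ℝ)
    (hsym : ∀ x : ℝ, D.f (m + x) = D.f (m - x))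
    (hk1 : k1v = m + (1 - D.F k1v) / D.f k1v)
    (hk0 : k0v = m - D.F k0v / D.f k0v) :
    k0v = 2 * m - k1v ∧
    k0v * D.F k0v + k1v * (1 - D.F k1v) + m * (D.F k1v - D.F k0v) = m ∧
    (∀ phi ∈ Set.Ioc (1 / 2 : ℝ) 1, ∀ d1 ∈ Set.Icc (0 : ℝ) 1, ∀ d0 ∈ Set.Icc (0 : ℝ) 1,
      rho d1 d0 phi ≠ 0 →
        V D phi m m d1 d0 (k1v / rho d1 d0 phi) =
          V D phi m m d1 d0 (k0v / rho d1 d0 phi)) := by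
  have hm1 : m ≤ k1v := by
    have : 0 ≤ (1 - D.F k1v) / D.f k1v :=
      div_nonneg (sub_nonneg.2 (D.F_le_one k1v)) (D.f_pos k1v).le
    linarith
  have hk0' := D.k0_eq_two_mul_sub_k1 hsym hk1 hk0
  have hF0 : D.F k0v = 1 - D.F k1v := by rw [hk0', D.F_two_mul_sub hsym]
  refine ⟨hk0', by rw [hF0, hk0']; ring, fun phi _ d1 _ d0 _ hrho => ?_⟩
  rw [V_div_rho D _ hrho, V_div_rho D _ hrho, max_eq_left (by linarith),
    max_eq_right (by linarith), hF0, hk0']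
  ring
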